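/- arXiv:2304.00560 — 13 statements merged into one kernel-verified Lean document; each statement's English description precedes it below -/
import Mathlib

section
/- Let ρ₁, ρ₂ > 0 and consider the 4×4 complex matrix A with rows (0, −1, 0, 1/ρ₁), (1, 0, −1/ρ₁, 0), (0, −1/ρ₂, 0, −1), (1/ρ₂, 0, 1, 0). Then A has exactly four distinct complex eigenvalues, namely 1/√(ρ₁ρ₂) + i, 1/√(ρ₁ρ₂) − i, −1/√(ρ₁ρ₂) + i, and −1/√(ρ₁ρ₂) − i; equivalently, its characteristic polynomial factors as the product of (λ − λ₀) over these four values λ₀. (This shows the two poles of the b-coupled spin-oscillator are non-degenerate fixed points of focus-focus type.) -/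
/-!
With `a = 1/ρ₁` and `b = 1/ρ₂`, the characteristic polynomial of the linearisation is the
biquadratic `X⁴ + 2(1 - ab)X² + (1 + ab)²`. Writing `ab = r²` it factors as
`((X - r)² + 1)((X + r)² + 1)`, whose roots are `±r ± i`, distinct as soon as `r ≠ 0`.
-/

open Polynomial Complex

section

variable {R : Type*} [CommRing R]

def spinOscillatorLinearization (a b : R) : Matrix (Fin 4) (Fin 4) R :=
  !![0, -1, 0, a; 1, 0, -a, 0; 0, -b, 0, -1; b, 0, 1, 0]

theorem charpoly_spinOscillatorLinearization (a b : R) :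
    (spinOscillatorLinearization a b).charpoly =
      X ^ 4 + C (2 * (1 - a * b)) * X ^ 2 + C ((1 + a * b) ^ 2) := by
  rw [spinOscillatorLinearization, Matrix.charpoly, Matrix.det_succ_row_zero]
  simp [Fin.sum_univ_succ, Matrix.det_fin_three, Matrix.charmatrix_apply, Matrix.submatrix_apply,
    Fin.succAbove, C_ofNat]
  ring

end

theorem focusFocus_quartic_eq_prod_X_sub_C (r : ℂ) :
    (X ^ 4 + C (2 * (1 - r ^ 2)) * X ^ 2 + C ((1 + r ^ 2) ^ 2) : ℂ[X]) =
      (X - C (r + I)) * (X - C (r - I)) * (X - C (-r + I)) * (X - C (-r - I)) := by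
  have hI : (C I : ℂ[X]) ^ 2 = -1 := by rw [← C_pow, I_sq, C_neg, C_1]
  simp only [map_add, map_sub, map_neg, map_mul, map_pow, map_one, map_ofNat]
  linear_combination ((X - C r) ^ 2 + (X + C r) ^ 2 + 1 - C I ^ 2) * hI

theorem pairwise_ne_focusFocus {r : ℝ} (hr : r ≠ 0) :
    List.Pairwise (· ≠ ·) [(r : ℂ) + I, r - I, -r + I, -r - I] := by
  have hr' : r ≠ -r := fun h => hr (by linarith)
  simp only [List.pairwise_cons, List.mem_cons, List.not_mem_nil, forall_eq_or_imp,
    List.Pairwise.nil]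
  norm_num [Complex.ext_iff, hr, hr']

/-- At the two poles of the b-coupled spin-oscillator, the linearized operator
`Ω⁻¹d²L + 2·Ω⁻¹d²H` has exactly the four distinct complex eigenvalues
`±1/√(ρ₁ρ₂) ± i`; equivalently its characteristic polynomial factors as the
product of `(λ − λ₀)` over these four values.  Hence the poles are
non-degenerate fixed points of focus-focus type. -/
theorem bCSO_poles_focus_focus (ρ₁ ρ₂ : ℝ) (hρ₁ : 0 < ρ₁) (hρ₂ : 0 < ρ₂) :
    let A : Matrix (Fin 4) (Fin 4) ℂ :=
      !![0, -1, 0, 1 / (ρ₁ : ℂ);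
         1, 0, -1 / (ρ₁ : ℂ), 0;
         0, -1 / (ρ₂ : ℂ), 0, -1;
         1 / (ρ₂ : ℂ), 0, 1, 0]
    let r : ℂ := (1 / Real.sqrt (ρ₁ * ρ₂) : ℝ)
    List.Pairwise (· ≠ ·) [r + I, r - I, -r + I, -r - I] ∧
      A.charpoly = (X - C (r + I)) * (X - C (r - I)) * (X - C (-r + I)) * (X - C (-r - I)) := by
  intro A r
  have hprod : 0 < ρ₁ * ρ₂ := mul_pos hρ₁ hρ₂
  have hr_sq : r ^ 2 = 1 / (ρ₁ : ℂ) * (1 / (ρ₂ : ℂ)) := by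
    simp only [r, ← ofReal_pow, div_pow, one_pow, Real.sq_sqrt hprod.le]
    push_cast
    ring
  have hA : A = spinOscillatorLinearization (1 / (ρ₁ : ℂ)) (1 / (ρ₂ : ℂ)) := by
    simp only [A, spinOscillatorLinearization, neg_div]
  refine ⟨pairwise_ne_focusFocus (by positivity), ?_⟩
  rw [← focusFocus_quartic_eq_prod_X_sub_C, hr_sq, hA, charpoly_spinOscillatorLinearization]
end

section
/- Let ρ₁, ρ₂ > 0. For every z ∈ (−1,1), θ ∈ ℝ, and (u,v) ∈ ℝ², the two vectors of ℝ⁴ given by V_L = (ρ₁, 0, ρ₂·u, ρ₂·v) and V_H = (−(z²/(2√(1−z²)))(u cos θ + v sin θ), (√(1−z²)/2)(−u sin θ + v cos θ), (√(1−z²)/2) cos θ, (√(1−z²)/2) sin θ) are linearly independent over ℝ. (This shows the b-coupled spin-oscillator has no singular points of rank 1.) -/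
open Real

/-! Pair `V_L` and `V_H` with the functionals `x ↦ x₀` and `x ↦ x₂ cos θ + x₃ sin θ`.
With `s = √(1 - z²)` and `p = u cos θ + v sin θ` this gives the `2 × 2` matrix
`[[ρ₁, -z² p / (2s)], [ρ₂ p, s / 2]]`, whose determinant `ρ₁ s / 2 + ρ₂ z² p² / (2s)` is
positive, so no nontrivial combination of `V_L` and `V_H` vanishes. -/

theorem LinearIndependent.pair_of_apply_det_ne_zero {R M : Type*} [CommRing R]
    [NoZeroDivisors R] [AddCommGroup M] [Module R M] {x y : M} (f g : M →ₗ[R] R)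
    (h : f x * g y - f y * g x ≠ 0) : LinearIndependent R ![x, y] := by
  rw [LinearIndependent.pair_iff]
  intro a b hab
  have hf : a * f x + b * f y = 0 := by simpa using congrArg f hab
  have hg : a * g x + b * g y = 0 := by simpa using congrArg g hab
  have ha : a * (f x * g y - f y * g x) = 0 := by linear_combination g y * hf - f y * hg
  have hb : b * (f x * g y - f y * g x) = 0 := by linear_combination f x * hg - g x * hf
  exact ⟨(mul_eq_zero.mp ha).resolve_right h, (mul_eq_zero.mp hb).resolve_right h⟩

/-- In the cylindrical chart, the component vectors of `dL` and `dH` of the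
b-coupled spin-oscillator (in the coframe `(dz/z, dθ, du, dv)`) are linearly
independent at every point with `z ∈ (−1,1)`: the system has no rank-1
singular points. -/
theorem bCSO_no_rank_one_points (ρ₁ ρ₂ : ℝ) (hρ₁ : 0 < ρ₁) (hρ₂ : 0 < ρ₂)
    (z θ u v : ℝ) (hz : z ∈ Set.Ioo (-1 : ℝ) 1) :
    LinearIndependent ℝ
      ![![ρ₁, 0, ρ₂ * u, ρ₂ * v],
        ![-(z ^ 2 / (2 * Real.sqrt (1 - z ^ 2))) * (u * Real.cos θ + v * Real.sin θ),
          (Real.sqrt (1 - z ^ 2) / 2) * (-u * Real.sin θ + v * Real.cos θ),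
          (Real.sqrt (1 - z ^ 2) / 2) * Real.cos θ,
          (Real.sqrt (1 - z ^ 2) / 2) * Real.sin θ]] := by
  have hs : 0 < √(1 - z ^ 2) := Real.sqrt_pos.mpr (by nlinarith [hz.1, hz.2])
  refine LinearIndependent.pair_of_apply_det_ne_zero (LinearMap.proj 0)
    (cos θ • LinearMap.proj 2 + sin θ • LinearMap.proj 3) (?_ : (0 : ℝ) < _).ne'
  simp only [LinearMap.add_apply, LinearMap.smul_apply, LinearMap.proj_apply, smul_eq_mul,
    Matrix.cons_val]
  set s := √(1 - z ^ 2)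
  have hdet_pos : 0 < ρ₁ * s / 2 + ρ₂ * (z * (u * cos θ + v * sin θ)) ^ 2 / (2 * s) := by
    positivity
  convert hdet_pos using 1
  field_simp
  linear_combination ρ₁ * s ^ 2 * sin_sq_add_cos_sq θ
end

section
/- Let ρ₁, ρ₂ > 0. For every (ℓ, h) ∈ ℝ² there exist (x, y, z) ∈ ℝ³ with x² + y² + z² = 1 and z ≠ 0, and (u, v) ∈ ℝ², such that ρ₁·log|z| + (ρ₂/2)(u² + v²) = ℓ and (x·u + y·v)/2 = h. That is, the momentum map (L,H) of the b-coupled spin-oscillator is surjective onto ℝ². -/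
/-!
Take `x = 0`. For `0 < z < 1` put `y = √(1 - z²)` and `v = 2h / y`, which puts the point on the
sphere with `H = h`; the oscillator then carries the energy `(ρ₂/2) v² = 2ρ₂h² / (1 - z²)`.
As `z → 0⁺` the term `ρ₁ log z` drives `ρ₁ log z + 2ρ₂h² / (1 - z²)` to `-∞`, so for small
`z` it lies below `ℓ`, and the remaining gap is filled by choosing `u`, which does not affect
`H`.
-/

open Real Filter Topology

theorem tendsto_mul_log_add_div_one_sub_sq_nhdsGT_zero {a : ℝ} (ha : 0 < a) (c : ℝ) :
    Tendsto (fun z => a * log z + c / (1 - z ^ 2)) (𝓝[>] 0) atBot := by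
  have hcont : Tendsto (fun z : ℝ => c / (1 - z ^ 2)) (𝓝[>] 0) (𝓝 (c / (1 - 0 ^ 2))) :=
    tendsto_nhdsWithin_of_tendsto_nhds <|
      (continuousAt_const.div (by fun_prop) (by norm_num)).tendsto
  exact (tendsto_log_nhdsGT_zero.const_mul_atBot ha).atBot_add hcont

theorem exists_sq_add_sq_eq_one_mul_eq {z : ℝ} (hz : z ^ 2 < 1) (h : ℝ) :
    ∃ y v : ℝ, y ^ 2 + z ^ 2 = 1 ∧ y * v = 2 * h ∧ v ^ 2 = 4 * h ^ 2 / (1 - z ^ 2) := by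
  have hpos : 0 < 1 - z ^ 2 := by linarith
  have hy : √(1 - z ^ 2) ^ 2 = 1 - z ^ 2 := sq_sqrt hpos.le
  have hy0 : √(1 - z ^ 2) ≠ 0 := (sqrt_pos.mpr hpos).ne'
  refine ⟨√(1 - z ^ 2), 2 * h / √(1 - z ^ 2), by linarith, by field_simp, ?_⟩
  rw [div_pow, hy]
  ring

theorem exists_mul_sq_add_eq {ρ a c : ℝ} (hρ : 0 < ρ) (hac : a ≤ c) :
    ∃ u : ℝ, ρ * u ^ 2 + a = c :=
  ⟨√((c - a) / ρ), by
    rw [sq_sqrt (div_nonneg (sub_nonneg.mpr hac) hρ.le)]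
    field_simp
    ring⟩

/-- The momentum map `(L,H)` of the b-coupled spin-oscillator is surjective
onto `ℝ²`. -/
theorem bCSO_momentum_map_surjective (ρ₁ ρ₂ : ℝ) (hρ₁ : 0 < ρ₁) (hρ₂ : 0 < ρ₂)
    (ℓ h : ℝ) :
    ∃ x y z u v : ℝ, x ^ 2 + y ^ 2 + z ^ 2 = 1 ∧ z ≠ 0 ∧
      ρ₁ * Real.log |z| + (ρ₂ / 2) * (u ^ 2 + v ^ 2) = ℓ ∧
      (x * u + y * v) / 2 = h := by
  obtain ⟨z, hz_le, hz⟩ :=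
    (((tendsto_mul_log_add_div_one_sub_sq_nhdsGT_zero hρ₁ (2 * ρ₂ * h ^ 2)).eventually
      (eventually_le_atBot ℓ)).and (Ioo_mem_nhdsGT one_pos)).exists
  obtain ⟨y, v, hyz, hyv, hv⟩ :=
    exists_sq_add_sq_eq_one_mul_eq (z := z) (by nlinarith [hz.1, hz.2]) h
  have hosc : ρ₂ / 2 * v ^ 2 = 2 * ρ₂ * h ^ 2 / (1 - z ^ 2) := by rw [hv]; ring
  obtain ⟨u, hu⟩ := exists_mul_sq_add_eq (half_pos hρ₂)
    (show ρ₁ * log z + ρ₂ / 2 * v ^ 2 ≤ ℓ by rwa [hosc])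
  refine ⟨0, y, z, u, v, by linarith, hz.1.ne', ?_, by linarith⟩
  rw [abs_of_pos hz.1]
  linear_combination hu
end

section
/- Let ρ₁, ρ₂ > 0. For every (ℓ, h) ∈ ℝ² there exist (x, y, z) ∈ ℝ³ with x² + y² + z² = 1 and z > 0, and (u, v) ∈ ℝ², such that ρ₁·log|z| + (ρ₂/2)(u² + v²) = ℓ and (x·u + y·v)/2 = h. That is, the momentum map of the b-coupled spin-oscillator is already surjective when restricted to the open upper hemisphere times ℝ² (and by the symmetry (x,y,u,v) ↦ (−x,−y,−u,−v), likewise on the open lower hemisphere). -/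
/-!
Put the spin on the meridian `y = 0`, at height `z > 0`, so `x = √(1 - z²)`. For fixed `(x, z)` the
oscillator `(u, v)` reaches `H = h` and `L = ℓ` exactly when `(2h)² ≤ x² E` with
`E = 2 (ℓ - ρ₁ log z) / ρ₂` the required value of `u² + v²` (take `u = 2h/x` and `v` the rest). As
`z → 0⁺`, `x² → 1` while `E → +∞` because `log z → -∞`, so a small enough height works.
-/

open Filter Topology

lemma exists_sq_add_sq_eq_and_mul_div_two_eq {x E h : ℝ} (hx : x ≠ 0)
    (hE : (2 * h) ^ 2 ≤ x ^ 2 * E) :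
    ∃ u v : ℝ, u ^ 2 + v ^ 2 = E ∧ x * u / 2 = h := by
  have hu : (2 * h / x) ^ 2 ≤ E := by
    rw [div_pow, div_le_iff₀ (by positivity)]
    linarith
  refine ⟨2 * h / x, √(E - (2 * h / x) ^ 2), ?_, by field_simp⟩
  rw [Real.sq_sqrt (sub_nonneg.mpr hu)]
  ring

lemma tendsto_sub_mul_log_nhdsGT_zero {ρ : ℝ} (hρ : 0 < ρ) (ℓ : ℝ) :
    Tendsto (fun z => ℓ - ρ * Real.log z) (𝓝[>] 0) atTop := by
  simpa only [sub_eq_add_neg, Function.comp_def] using tendsto_atTop_add_const_left _ ℓ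
    (tendsto_neg_atBot_atTop.comp (Real.tendsto_log_nhdsGT_zero.const_mul_atBot hρ))

lemma tendsto_one_sub_sq_nhdsGT_zero :
    Tendsto (fun z : ℝ => 1 - z ^ 2) (𝓝[>] 0) (𝓝 1) :=
  ((continuous_const.sub (continuous_pow 2)).tendsto' 0 1 (by norm_num)).mono_left
    nhdsWithin_le_nhds

/-- The momentum map `(L,H)` of the b-coupled spin-oscillator is already
surjective onto `ℝ²` when restricted to the open upper hemisphere times `ℝ²`. -/
theorem bCSO_momentum_map_surjective_upper_hemisphere (ρ₁ ρ₂ : ℝ)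
    (hρ₁ : 0 < ρ₁) (hρ₂ : 0 < ρ₂) (ℓ h : ℝ) :
    ∃ x y z u v : ℝ, x ^ 2 + y ^ 2 + z ^ 2 = 1 ∧ 0 < z ∧
      ρ₁ * Real.log |z| + (ρ₂ / 2) * (u ^ 2 + v ^ 2) = ℓ ∧
      (x * u + y * v) / 2 = h := by
  have hE : ∀ᶠ z in 𝓝[>] 0, (2 * h) ^ 2 ≤ (1 - z ^ 2) * (2 * (ℓ - ρ₁ * Real.log z) / ρ₂) :=
    (tendsto_one_sub_sq_nhdsGT_zero.pos_mul_atTop one_pos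
      (((tendsto_sub_mul_log_nhdsGT_zero hρ₁ ℓ).const_mul_atTop two_pos).atTop_div_const
        hρ₂)).eventually_ge_atTop _
  have hz : ∀ᶠ z in 𝓝[>] (0 : ℝ), z ∈ Set.Ioo 0 1 := Ioo_mem_nhdsGT one_pos
  obtain ⟨z, ⟨hz0, hz1⟩, hzE⟩ := (hz.and hE).exists
  have hx : √(1 - z ^ 2) ^ 2 = 1 - z ^ 2 := Real.sq_sqrt (by nlinarith)
  obtain ⟨u, v, huv, hu⟩ :=
    exists_sq_add_sq_eq_and_mul_div_two_eq (Real.sqrt_pos.mpr (by nlinarith)).ne' (hx ▸ hzE)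
  refine ⟨√(1 - z ^ 2), 0, z, u, v, by rw [hx]; ring, hz0, ?_, by simpa using hu⟩
  rw [abs_of_pos hz0, huv]
  field_simp
  ring
end

section
/- Let ρ₁, ρ₂ > 0 and γ > 0, and set c = γ/√(ρ₁ρ₂). Consider the 4×4 complex matrix A_γ with rows (0, −1, 0, −γ/ρ₁), (1, 0, γ/ρ₁, 0), (0, −γ/ρ₂, 0, −1), (γ/ρ₂, 0, 1, 0). Then the characteristic polynomial of A_γ equals (λ² + (1+c)²)(λ² + (1−c)²); in particular its eigenvalues (with multiplicity) are ±i(1+c) and ±i(1−c), and whenever γ ≠ √(ρ₁ρ₂) these are four distinct purely imaginary numbers. (This shows the two poles of the reversed b-coupled spin-oscillator are non-degenerate fixed points of elliptic-elliptic type.) -/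
/-!
In the chart `(x, y, u, v)` the matrix is two rotation generators coupled by `t = γ/ρ₁` and
`s = γ/ρ₂`. Expanding the determinant, the characteristic polynomial depends on the coupling
only through `t s = c²`: it is `X⁴ + (2 + 2c²) X² + (1 - c²)²`, which factors as
`(X² + (1 + c)²)(X² + (1 - c)²)`. Over `ℂ` each factor `X² + a²` splits as `(X - i a)(X + i a)`,
and the four roots `±i(1 ± c)` are distinct as soon as `c ∉ {-1, 0, 1}`.
-/

open Polynomial Complex

theorem charpoly_coupledRotations {R : Type*} [CommRing R] (t s c : R) (h : t * s = c ^ 2) :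
    (!![0, -1, 0, -t; 1, 0, t, 0; 0, -s, 0, -1; s, 0, 1, 0] : Matrix (Fin 4) (Fin 4) R).charpoly =
      (X ^ 2 + C ((1 + c) ^ 2)) * (X ^ 2 + C ((1 - c) ^ 2)) := by
  have hcharmatrix : (!![0, -1, 0, -t; 1, 0, t, 0; 0, -s, 0, -1; s, 0, 1, 0] :
      Matrix (Fin 4) (Fin 4) R).charmatrix =
      !![X, 1, 0, C t; -1, X, -C t, 0; 0, C s, X, 1; -C s, 0, -1, X] := by
    ext i j
    fin_cases i <;> fin_cases j <;> simp
  have hC : C t * C s = C c ^ 2 := by rw [← map_mul, h, map_pow]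
  rw [Matrix.charpoly, hcharmatrix, Matrix.det_succ_row_zero]
  simp [Fin.sum_univ_succ, Matrix.det_fin_three, Fin.succAbove, Fin.castSucc,
    Fin.castAdd, Fin.castLE, Fin.succ]
  linear_combination (2 * X ^ 2 - 2 + C t * C s + C c ^ 2) * hC

theorem X_sq_add_C_sq_eq_mul (a : ℂ) :
    X ^ 2 + C (a ^ 2) = (X - C (I * a)) * (X + C (I * a)) := by
  have h : C (I * a) ^ 2 = -C (a ^ 2) := by
    rw [← map_pow, mul_pow, I_sq, neg_one_mul, map_neg]
  linear_combination h

theorem pairwise_ne_I_mul_of_ne (a b : ℝ) (ha : a ≠ 0) (hb : b ≠ 0) (hab : a ≠ b) (hab' : a ≠ -b) :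
    List.Pairwise (· ≠ ·) [I * a, -(I * a), I * b, -(I * b)] := by
  have hinj : Function.Injective fun x : ℝ => I * x := fun x y h => by
    exact_mod_cast mul_left_cancel₀ I_ne_zero h
  have hreal : List.Pairwise (· ≠ ·) [a, -a, b, -b] := by
    simp only [List.pairwise_cons, List.mem_cons, List.not_mem_nil, List.Pairwise.nil,
      forall_eq_or_imp, false_implies, implies_true, and_true]
    exact ⟨⟨fun h => ha (by linarith), hab, hab'⟩,
      ⟨fun h => hab' (by linarith), fun h => hab (by linarith)⟩, fun h => hb (by linarith)⟩
  simpa [← mul_neg] using hreal.map (fun x : ℝ => I * x) fun _ _ => hinj.ne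

/-- At the two poles of the reversed b-coupled spin-oscillator, the linearized
operator `Ω⁻¹d²L + 2γ·Ω⁻¹d²H` has characteristic polynomial
`(λ² + (1+c)²)(λ² + (1−c)²)` with `c = γ/√(ρ₁ρ₂)`; in particular its
eigenvalues are `±i(1+c)` and `±i(1−c)`, and when `γ ≠ √(ρ₁ρ₂)` these are four
distinct purely imaginary numbers.  Hence the poles are non-degenerate fixed
points of elliptic-elliptic type. -/
theorem reversed_bCSO_poles_elliptic_elliptic (ρ₁ ρ₂ γ : ℝ)
    (hρ₁ : 0 < ρ₁) (hρ₂ : 0 < ρ₂) (hγ : 0 < γ) :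
    let c : ℝ := γ / Real.sqrt (ρ₁ * ρ₂)
    let A : Matrix (Fin 4) (Fin 4) ℂ :=
      !![0, -1, 0, -(γ : ℂ) / (ρ₁ : ℂ);
         1, 0, (γ : ℂ) / (ρ₁ : ℂ), 0;
         0, -(γ : ℂ) / (ρ₂ : ℂ), 0, -1;
         (γ : ℂ) / (ρ₂ : ℂ), 0, 1, 0]
    A.charpoly = (X ^ 2 + C (((1 + c : ℝ) : ℂ) ^ 2)) * (X ^ 2 + C (((1 - c : ℝ) : ℂ) ^ 2)) ∧
      A.charpoly =
        (X - C (I * ((1 + c : ℝ) : ℂ))) * (X + C (I * ((1 + c : ℝ) : ℂ))) *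
          (X - C (I * ((1 - c : ℝ) : ℂ))) * (X + C (I * ((1 - c : ℝ) : ℂ))) ∧
      (γ ≠ Real.sqrt (ρ₁ * ρ₂) →
        List.Pairwise (· ≠ ·)
          [I * ((1 + c : ℝ) : ℂ), -(I * ((1 + c : ℝ) : ℂ)),
           I * ((1 - c : ℝ) : ℂ), -(I * ((1 - c : ℝ) : ℂ))]) := by
  intro c A
  have hsqrt : 0 < Real.sqrt (ρ₁ * ρ₂) := Real.sqrt_pos.2 (mul_pos hρ₁ hρ₂)
  have hc : 0 < c := div_pos hγ hsqrt
  have hts : (γ / ρ₁) * (γ / ρ₂) = c ^ 2 := by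
    rw [div_pow, Real.sq_sqrt (mul_pos hρ₁ hρ₂).le]
    ring
  have hchar : A.charpoly =
      (X ^ 2 + C (((1 + c : ℝ) : ℂ) ^ 2)) * (X ^ 2 + C (((1 - c : ℝ) : ℂ) ^ 2)) := by
    have h := charpoly_coupledRotations ((γ : ℂ) / ρ₁) ((γ : ℂ) / ρ₂) (c : ℂ)
      (by exact_mod_cast hts)
    rw [← neg_div, ← neg_div] at h
    push_cast
    exact h
  refine ⟨hchar, ?_, fun hne => ?_⟩
  · rw [hchar, X_sq_add_C_sq_eq_mul, X_sq_add_C_sq_eq_mul, ← mul_assoc]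
  · have hc1 : c ≠ 1 := fun h => hne ((div_eq_one_iff_eq hsqrt.ne').1 h)
    exact pairwise_ne_I_mul_of_ne _ _ (by positivity) (sub_ne_zero.2 hc1.symm) (by linarith)
      (by linarith)
end

section
/- Let ρ₁, ρ₂ > 0. Fix z ∈ (−1,1) with z ≠ 0, θ ∈ ℝ, and (u,v) ∈ ℝ². Then there exists μ ≠ 0 satisfying the four equations −μρ₁ − (z²/(1−z²))(u cos θ + v sin θ) = 0, −u sin θ + v cos θ = 0, μρ₂·u + cos θ = 0, and μρ₂·v + sin θ = 0, if and only if (u,v) = ε·√(ρ₁/ρ₂)·(√(1−z²)/z)·(cos θ, sin θ) for some ε ∈ {1, −1}. (This parametrizes the rank-1, elliptic-regular, singular points of the reversed b-coupled spin-oscillator.) -/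
/-!
The last two equations say `(u, v) = t • (cos θ, sin θ)` with `t = -1 / (μ ρ₂)`; this makes the
second equation automatic and turns the first into `ρ₁ = z² / (1 - z²) · ρ₂ · t²`, so that
`t = ±√(ρ₁ / ρ₂) · √(1 - z²) / z`.
-/

open Real

lemma exists_sq_eq_sq_and_iff_exists_sign {K : ℝ} {P : ℝ → Prop} :
    (∃ t, t ^ 2 = K ^ 2 ∧ P t) ↔ ∃ ε : ℝ, (ε = 1 ∨ ε = -1) ∧ P (ε * K) := by
  constructor
  · rintro ⟨t, ht, hP⟩
    rcases sq_eq_sq_iff_eq_or_eq_neg.mp ht with rfl | rfl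
    · exact ⟨1, Or.inl rfl, by rwa [one_mul]⟩
    · exact ⟨-1, Or.inr rfl, by rwa [neg_one_mul]⟩
  · rintro ⟨ε, hε, hP⟩
    refine ⟨ε * K, ?_, hP⟩
    rcases hε with rfl | rfl <;> ring

lemma exists_proportionality_iff_exists_scale {ρ₁ ρ₂ a c s u v : ℝ} (hρ₁ : ρ₁ ≠ 0)
    (hρ₂ : ρ₂ ≠ 0) (hcs : c ^ 2 + s ^ 2 = 1) :
    (∃ μ : ℝ, μ ≠ 0 ∧ -μ * ρ₁ - a * (u * c + v * s) = 0 ∧ -u * s + v * c = 0 ∧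
        μ * ρ₂ * u + c = 0 ∧ μ * ρ₂ * v + s = 0) ↔
      ∃ t : ℝ, ρ₁ = a * ρ₂ * t ^ 2 ∧ u = t * c ∧ v = t * s := by
  constructor
  · rintro ⟨μ, hμ, h₁, -, h₃, h₄⟩
    refine ⟨-1 / (μ * ρ₂), ?_, ?_, ?_⟩
    · field_simp
      linear_combination (-(μ * ρ₂)) * h₁ - a * c * h₃ - a * s * h₄ + a * hcs
    · field_simp; linear_combination h₃
    · field_simp; linear_combination h₄
  · rintro ⟨t, hρ, rfl, rfl⟩
    have ht : t ≠ 0 := by rintro rfl; simp [hρ₁] at hρ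
    refine ⟨-1 / (t * ρ₂), by simp [ht, hρ₂], ?_, by ring, ?_, ?_⟩
    · field_simp
      linear_combination hρ - a * ρ₂ * t ^ 2 * hcs
    all_goals field_simp; ring

lemma eq_mul_sq_iff_sq_eq_sq {ρ₁ ρ₂ z t : ℝ} (hρ₁ : 0 ≤ ρ₁) (hρ₂ : 0 < ρ₂) (hz0 : z ≠ 0)
    (hz : z ^ 2 < 1) :
    ρ₁ = z ^ 2 / (1 - z ^ 2) * ρ₂ * t ^ 2 ↔ t ^ 2 = (√(ρ₁ / ρ₂) * (√(1 - z ^ 2) / z)) ^ 2 := by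
  have hw : 0 < 1 - z ^ 2 := by linarith
  rw [mul_pow, div_pow, sq_sqrt (by positivity), sq_sqrt hw.le]
  field_simp
  constructor <;> intro h <;> linarith

/-- Parametrization of the rank-1 (elliptic-regular) singular points of the
reversed b-coupled spin-oscillator: the proportionality equations
`μ·dL + dH = 0` admit a solution `μ ≠ 0` exactly when
`(u,v) = ±√(ρ₁/ρ₂)·(√(1−z²)/z)·(cos θ, sin θ)`. -/
theorem reversed_bCSO_rank_one_parametrization (ρ₁ ρ₂ : ℝ)
    (hρ₁ : 0 < ρ₁) (hρ₂ : 0 < ρ₂) (z θ u v : ℝ)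
    (hz : z ∈ Set.Ioo (-1 : ℝ) 1) (hz0 : z ≠ 0) :
    (∃ μ : ℝ, μ ≠ 0 ∧
        -μ * ρ₁ - (z ^ 2 / (1 - z ^ 2)) * (u * Real.cos θ + v * Real.sin θ) = 0 ∧
        -u * Real.sin θ + v * Real.cos θ = 0 ∧
        μ * ρ₂ * u + Real.cos θ = 0 ∧
        μ * ρ₂ * v + Real.sin θ = 0) ↔
      (∃ ε : ℝ, (ε = 1 ∨ ε = -1) ∧
        u = ε * Real.sqrt (ρ₁ / ρ₂) * (Real.sqrt (1 - z ^ 2) / z) * Real.cos θ ∧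
        v = ε * Real.sqrt (ρ₁ / ρ₂) * (Real.sqrt (1 - z ^ 2) / z) * Real.sin θ) := by
  have hz2 : z ^ 2 < 1 := by rw [sq_lt_one_iff_abs_lt_one, abs_lt]; exact hz
  rw [exists_proportionality_iff_exists_scale hρ₁.ne' hρ₂.ne' (cos_sq_add_sin_sq θ)]
  simp_rw [eq_mul_sq_iff_sq_eq_sq hρ₁.le hρ₂ hz0 hz2, exists_sq_eq_sq_and_iff_exists_sign,
    mul_assoc]
end

section
/- Let 0 < R₁ < R₂ and t ∈ (0,1]. Fix z₁ with 0 < |z₁| < 1, z₂ with |z₂| < 1, and θ₁, θ₂ ∈ ℝ. Consider the two vectors of ℝ⁴: W_L = (R₁/z₁, 0, R₂, 0) and W_H = (a₁, a₂, a₃, a₄) where a₁ = 1 − t + t z₂ − t z₁ √(1−z₂²) cos(θ₁−θ₂)/√(1−z₁²), a₂ = −t √((1−z₁²)(1−z₂²)) sin(θ₁−θ₂), a₃ = t (z₁ − z₂ √(1−z₁²) cos(θ₁−θ₂)/√(1−z₂²)), a₄ = t √((1−z₁²)(1−z₂²)) sin(θ₁−θ₂). If W_L and W_H are linearly dependent over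 ℝ, then sin(θ₁−θ₂) = 0. (Hence the set where dL and dH of System 1 are dependent away from the poles is contained in the measure-zero set {θ₁ = θ₂} ∪ {θ₁ = θ₂ + π}, proving dL ∧ dH ≠ 0 almost everywhere.) -/
/-- Away from the poles, whenever the component vectors of `dL` and `dH` of
System 1 of the b-coupled angular momenta (in the coframe
`(dz₁, dθ₁, dz₂, dθ₂)`) are linearly dependent, one has `sin(θ₁−θ₂) = 0`.
Hence `dL ∧ dH ≠ 0` almost everywhere. -/
theorem bCAM_system1_dependence_implies_sin_zero (R₁ R₂ t : ℝ)
    (hR₁ : 0 < R₁) (hR₁₂ : R₁ < R₂) (ht : t ∈ Set.Ioc (0 : ℝ) 1)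
    (z₁ z₂ θ₁ θ₂ : ℝ) (hz₁ : 0 < |z₁|) (hz₁' : |z₁| < 1) (hz₂ : |z₂| < 1)
    (hdep : ¬ LinearIndependent ℝ
      ![![R₁ / z₁, 0, R₂, 0],
        ![1 - t + t * z₂ -
            t * z₁ * Real.sqrt (1 - z₂ ^ 2) * Real.cos (θ₁ - θ₂) / Real.sqrt (1 - z₁ ^ 2),
          -t * Real.sqrt ((1 - z₁ ^ 2) * (1 - z₂ ^ 2)) * Real.sin (θ₁ - θ₂),
          t * (z₁ - z₂ * Real.sqrt (1 - z₁ ^ 2) * Real.cos (θ₁ - θ₂) / Real.sqrt (1 - z₂ ^ 2)),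
          t * Real.sqrt ((1 - z₁ ^ 2) * (1 - z₂ ^ 2)) * Real.sin (θ₁ - θ₂)]]) :
    Real.sin (θ₁ - θ₂) = 0 := by
  by_contra hs
  apply hdep
  have ht0 : (0 : ℝ) < t := ht.1
  have h1 : 0 < 1 - z₁ ^ 2 := by nlinarith [sq_abs z₁, abs_nonneg z₁]
  have h2 : 0 < 1 - z₂ ^ 2 := by nlinarith [sq_abs z₂, abs_nonneg z₂]
  have hsq : 0 < Real.sqrt ((1 - z₁ ^ 2) * (1 - z₂ ^ 2)) :=
    Real.sqrt_pos.mpr (mul_pos h1 h2)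
  have hz₁0 : z₁ ≠ 0 := abs_pos.mp hz₁
  have hkey : -t * Real.sqrt ((1 - z₁ ^ 2) * (1 - z₂ ^ 2)) * Real.sin (θ₁ - θ₂) ≠ 0 :=
    mul_ne_zero (mul_ne_zero (neg_ne_zero.mpr ht0.ne') hsq.ne') hs
  rw [linearIndependent_fin2]
  constructor
  · intro h
    exact hkey (by simpa using congrFun h 1)
  · intro a h
    have h1' := congrFun h 1
    simp [Pi.smul_apply] at h1'
    have ha : a = 0 := by
      rcases h1' with h | (h | h) | h
      · exact h
      · exact absurd h ht0.ne'
      · exact absurd h hsq.ne'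
      · exact absurd h hs
    have h0 := congrFun h 0
    simp [Pi.smul_apply, ha] at h0
    exact div_ne_zero hR₁.ne' hz₁0 h0.symm
end

section
/- Let 0 < R₁ < R₂ and t ∈ [0,1]. Consider the 4×4 complex matrix B(t,R₁,R₂) with rows (0, −1/R₁ − 1, 0, t/R₁), (1/R₁ + 1, 0, −t/R₁, 0), (0, t/R₂, 0, −t/R₂ − 1), (−t/R₂, 0, t/R₂ + 1, 0). Then there exist real numbers α, β with α > 0, β > 0 and α ≠ β such that the eigenvalues of B(t,R₁,R₂) are exactly the four distinct purely imaginary numbers iα, −iα, iβ, −iβ. (Hence the fixed point p₊,₊ of the (b-)coupled angular momenta is a non-degenerate fixed point of elliptic-elliptic type for every t ∈ [0,1].) -/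
/-!
The matrix has the block form `couplingMatrix a b c d` with `a = 1/R₁ + 1`, `b = t/R₁`,
`c = t/R₂`, `d = t/R₂ + 1`, whose characteristic polynomial is the biquadratic
`X⁴ + p X² + q` with `p = a² + d² + 2bc` and `q = (ad - bc)²`. Its discriminant
`p² - 4q = ((a - d)² + 4bc)(a + d)²` is positive because `a ≠ d`, so `X² = -μ` for two
distinct positive reals `μ = α², β²`, and the roots are `±iα, ±iβ`.
-/

open Polynomial Complex

def couplingMatrix {R : Type*} [Ring R] (a b c d : R) : Matrix (Fin 4) (Fin 4) R :=
  !![0, -a, 0, b; a, 0, -b, 0; 0, c, 0, -d; -c, 0, d, 0]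

theorem charpoly_couplingMatrix {R : Type*} [CommRing R] (a b c d : R) :
    (couplingMatrix a b c d).charpoly =
      X ^ 4 + C (a ^ 2 + d ^ 2 + 2 * b * c) * X ^ 2 + C ((a * d - b * c) ^ 2) := by
  rw [Matrix.charpoly, Matrix.det_succ_row_zero]
  simp [Fin.sum_univ_succ, Matrix.det_fin_three, Fin.succAbove, Matrix.charmatrix_apply,
    couplingMatrix, C_ofNat]
  ring

theorem biquadratic_eq_prod_X_sub_C_I_mul (α β : ℂ) :
    X ^ 4 + C (α ^ 2 + β ^ 2) * X ^ 2 + C (α ^ 2 * β ^ 2) =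
      (X - C (I * α)) * (X - C (-(I * α))) * (X - C (I * β)) * (X - C (-(I * β))) := by
  have hI : C I ^ 2 = (-1 : ℂ[X]) := by rw [← C_pow, I_sq, C_neg, C_1]
  simp only [C_mul, C_neg, C_add, C_pow]
  linear_combination (X ^ 2 * (C α ^ 2 + C β ^ 2) + C α ^ 2 * C β ^ 2 * (1 - C I ^ 2)) * hI

theorem pairwise_ne_pm_I_mul {α β : ℝ} (hα : 0 < α) (hβ : 0 < β) (hαβ : α ≠ β) :
    List.Pairwise (· ≠ ·) [I * (α : ℂ), -(I * (α : ℂ)), I * (β : ℂ), -(I * (β : ℂ))] := by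
  simp only [List.pairwise_cons, List.mem_cons, forall_eq_or_imp, List.not_mem_nil,
    IsEmpty.forall_iff, implies_true, List.Pairwise.nil, and_true]
  refine ⟨⟨?_, ?_, ?_⟩, ⟨?_, ?_⟩, ?_⟩ <;> intro h <;> have him := congrArg im h <;>
    simp at him <;> first | exact hαβ him | linarith

theorem exists_sq_add_sq_eq_and_sq_mul_sq_eq {p q : ℝ} (hp : 0 < p) (hq : 0 < q)
    (hpq : 4 * q < p ^ 2) :
    ∃ α β : ℝ, 0 < α ∧ 0 < β ∧ α ≠ β ∧ α ^ 2 + β ^ 2 = p ∧ α ^ 2 * β ^ 2 = q := by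
  obtain ⟨s, hs, hs_sq⟩ : ∃ s : ℝ, 0 < s ∧ s ^ 2 = p ^ 2 - 4 * q :=
    ⟨√(p ^ 2 - 4 * q), Real.sqrt_pos.2 (by linarith), Real.sq_sqrt (by linarith)⟩
  have hsp : s < p := by nlinarith
  refine ⟨√((p + s) / 2), √((p - s) / 2), Real.sqrt_pos.2 (by linarith),
    Real.sqrt_pos.2 (by linarith), ?_, ?_, ?_⟩
  · rw [Ne, Real.sqrt_inj (by linarith) (by linarith)]
    linarith
  · rw [Real.sq_sqrt (by linarith), Real.sq_sqrt (by linarith)]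
    ring
  · rw [Real.sq_sqrt (by linarith), Real.sq_sqrt (by linarith)]
    linear_combination (-1 / 4 : ℝ) * hs_sq

theorem exists_charpoly_couplingMatrix_eq_prod {a b c d : ℝ} (hb : 0 ≤ b) (hc : 0 ≤ c)
    (hba : b < a) (hcd : c < d) (had : a ≠ d) :
    ∃ α β : ℝ, 0 < α ∧ 0 < β ∧ α ≠ β ∧
      ((couplingMatrix a b c d).map ofReal).charpoly =
        (X - C (I * (α : ℂ))) * (X - C (-(I * (α : ℂ)))) *
          (X - C (I * (β : ℂ))) * (X - C (-(I * (β : ℂ)))) := by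
  have hdet : 0 < a * d - b * c := by nlinarith
  have hdisc : (a ^ 2 + d ^ 2 + 2 * b * c) ^ 2 - 4 * (a * d - b * c) ^ 2 =
      ((a - d) ^ 2 + 4 * (b * c)) * (a + d) ^ 2 := by ring
  have hdisc_pos : 0 < ((a - d) ^ 2 + 4 * (b * c)) * (a + d) ^ 2 :=
    mul_pos (by nlinarith [sq_pos_iff.2 (sub_ne_zero.2 had)]) (by nlinarith)
  obtain ⟨α, β, hα, hβ, hαβ, hsum, hprod⟩ :=
    exists_sq_add_sq_eq_and_sq_mul_sq_eq (p := a ^ 2 + d ^ 2 + 2 * b * c)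
      (q := (a * d - b * c) ^ 2) (by nlinarith) (pow_pos hdet 2) (by linarith)
  refine ⟨α, β, hα, hβ, hαβ, (Matrix.charpoly_map _ ofRealHom).trans ?_⟩
  rw [charpoly_couplingMatrix, ← hsum, ← hprod, ← biquadratic_eq_prod_X_sub_C_I_mul]
  simp [Polynomial.map_add]

/-- For every `t ∈ [0,1]`, the linearization of the (b-)coupled angular
momenta at the fixed point `p₊,₊` has four distinct purely imaginary
eigenvalues `±iα, ±iβ` with `α, β > 0`, `α ≠ β`: the point is a non-degenerate
fixed point of elliptic-elliptic type. -/
theorem bCAM_p_plus_plus_elliptic_elliptic (R₁ R₂ t : ℝ)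
    (hR₁ : 0 < R₁) (hR₁₂ : R₁ < R₂) (ht : t ∈ Set.Icc (0 : ℝ) 1) :
    let B : Matrix (Fin 4) (Fin 4) ℂ :=
      !![0, ((-1 / R₁ - 1 : ℝ) : ℂ), 0, ((t / R₁ : ℝ) : ℂ);
         ((1 / R₁ + 1 : ℝ) : ℂ), 0, ((-t / R₁ : ℝ) : ℂ), 0;
         0, ((t / R₂ : ℝ) : ℂ), 0, ((-t / R₂ - 1 : ℝ) : ℂ);
         ((-t / R₂ : ℝ) : ℂ), 0, ((t / R₂ + 1 : ℝ) : ℂ), 0]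
    ∃ α β : ℝ, 0 < α ∧ 0 < β ∧ α ≠ β ∧
      List.Pairwise (· ≠ ·)
        [I * (α : ℂ), -(I * (α : ℂ)), I * (β : ℂ), -(I * (β : ℂ))] ∧
      B.charpoly =
        (X - C (I * (α : ℂ))) * (X - C (-(I * (α : ℂ)))) *
          (X - C (I * (β : ℂ))) * (X - C (-(I * (β : ℂ)))) := by
  intro B
  obtain ⟨ht0, ht1⟩ := ht
  have hR₂ : 0 < R₂ := hR₁.trans hR₁₂
  have hB : B = (couplingMatrix (1 / R₁ + 1) (t / R₁) (t / R₂) (t / R₂ + 1)).map ofReal := by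
    ext i j
    fin_cases i <;> fin_cases j <;> simp [B, couplingMatrix, neg_div] <;> ring
  have hba : t / R₁ < 1 / R₁ + 1 := calc
    t / R₁ ≤ 1 / R₁ := by gcongr
    _ < 1 / R₁ + 1 := lt_add_one _
  have hca : t / R₂ < 1 / R₁ := calc
    t / R₂ ≤ 1 / R₂ := by gcongr
    _ < 1 / R₁ := by gcongr
  obtain ⟨α, β, hα, hβ, hαβ, hcharpoly⟩ := exists_charpoly_couplingMatrix_eq_prod
    (by positivity : 0 ≤ t / R₁) (by positivity : 0 ≤ t / R₂) hba (lt_add_one _)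
    (by linarith : t / R₂ + 1 < 1 / R₁ + 1).ne'
  refine ⟨α, β, hα, hβ, hαβ, pairwise_ne_pm_I_mul hα hβ hαβ, ?_⟩
  rw [hB]
  exact hcharpoly
end

section
/- Let R₁, R₂ > 0 and t ∈ ℝ. The 4×4 real matrix with rows (0, (2t−1)/R₁ − 1, 0, t/R₁), (1 − (2t−1)/R₁, 0, −t/R₁, 0), (0, t/R₂, 0, t/R₂ − 1), (−t/R₂, 0, 1 − t/R₂, 0) has the same characteristic polynomial as the 4×4 real matrix with rows (0, (2t−1)/R₁ − 1, 0, −t/R₁), (1 − (2t−1)/R₁, 0, t/R₁, 0), (0, −t/R₂, 0, t/R₂ − 1), (t/R₂, 0, 1 − t/R₂, 0). (That is, the linearization matrix A²_{p₋,₊} of System 2 at the fixed point p₋,₊ has the same characteristic polynomial P⁰₋,₋ as the linearization A⁰_{p₋,₋} of the classical coupled angular momenta at p₋,₋; hence p₋,₊ is non-degenerate of elliptic-elliptic type for all t.) -/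
open Matrix

open Polynomial in
/-- The characteristic polynomial is invariant under conjugation by an
involutive matrix `D` (i.e. with `D * D = 1`). -/
lemma charpoly_conj_invol {R : Type*} [CommRing R] (D A : Matrix (Fin 4) (Fin 4) R)
    (hD : D * D = 1) : (D * A * D).charpoly = A.charpoly := by
  have hmap : (D.map (C : R →+* R[X])) * (D.map C) = 1 := by
    rw [← Matrix.map_mul, hD]; simp
  have key : charmatrix (D * A * D) = (D.map C) * charmatrix A * (D.map C) := by
    rw [charmatrix, charmatrix, Matrix.mul_sub, Matrix.sub_mul]
    congr 1
    · simp only [scalar_apply, ← smul_one_eq_diagonal]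
      rw [Matrix.mul_smul, Matrix.smul_mul, Matrix.mul_one, hmap]
    · simp only [RingHom.mapMatrix_apply, Matrix.map_mul]
  rw [Matrix.charpoly, Matrix.charpoly, key, Matrix.det_mul, Matrix.det_mul]
  have : (D.map (C : R →+* R[X])).det * (D.map C).det = 1 := by
    rw [← Matrix.det_mul, hmap, Matrix.det_one]
  calc (D.map (C : R →+* R[X])).det * (charmatrix A).det * (D.map C).det
      = (charmatrix A).det * ((D.map C).det * (D.map C).det) := by ring
    _ = (charmatrix A).det := by rw [this, mul_one]

/-- The linearization `A²_{p₋,₊}` of System 2 of the b-coupled angular momenta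
at `p₋,₊` has the same characteristic polynomial as the linearization
`A⁰_{p₋,₋}` of the classical coupled angular momenta at `p₋,₋`; hence `p₋,₊`
is non-degenerate of elliptic-elliptic type for all `t`. -/
theorem bCAM_system2_p_minus_plus_charpoly (R₁ R₂ t : ℝ)
    (hR₁ : 0 < R₁) (hR₂ : 0 < R₂) :
    (!![0, (2 * t - 1) / R₁ - 1, 0, t / R₁;
        1 - (2 * t - 1) / R₁, 0, -t / R₁, 0;
        0, t / R₂, 0, t / R₂ - 1;
        -t / R₂, 0, 1 - t / R₂, 0] : Matrix (Fin 4) (Fin 4) ℝ).charpoly =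
    (!![0, (2 * t - 1) / R₁ - 1, 0, -t / R₁;
        1 - (2 * t - 1) / R₁, 0, t / R₁, 0;
        0, -t / R₂, 0, t / R₂ - 1;
        t / R₂, 0, 1 - t / R₂, 0] : Matrix (Fin 4) (Fin 4) ℝ).charpoly := by
  set D : Matrix (Fin 4) (Fin 4) ℝ := diagonal ![1, 1, -1, -1] with hDdef
  have hD : D * D = 1 := by
    rw [hDdef, diagonal_mul_diagonal]
    ext i j
    fin_cases i <;> fin_cases j <;> simp [diagonal]
  have heq : (!![0, (2 * t - 1) / R₁ - 1, 0, t / R₁;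
        1 - (2 * t - 1) / R₁, 0, -t / R₁, 0;
        0, t / R₂, 0, t / R₂ - 1;
        -t / R₂, 0, 1 - t / R₂, 0] : Matrix (Fin 4) (Fin 4) ℝ) =
      D * (!![0, (2 * t - 1) / R₁ - 1, 0, -t / R₁;
        1 - (2 * t - 1) / R₁, 0, t / R₁, 0;
        0, -t / R₂, 0, t / R₂ - 1;
        t / R₂, 0, 1 - t / R₂, 0] : Matrix (Fin 4) (Fin 4) ℝ) * D := by
    rw [hDdef]
    ext i j
    fin_cases i <;> fin_cases j <;>
      simp [Matrix.mul_apply, Fin.sum_univ_four, diagonal, neg_div]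
  rw [heq, charpoly_conj_invol _ _ hD]
end

section
/- Let R₁, R₂ > 0 and t ∈ ℝ. The 4×4 real matrix with rows (0, −1/R₁ − 1, 0, t/R₁), (1/R₁ + 1, 0, −t/R₁, 0), (0, −t/R₂, 0, t/R₂ − 1), (t/R₂, 0, 1 − t/R₂, 0) has the same characteristic polynomial as the 4×4 real matrix with rows (0, −1/R₁ − 1, 0, −t/R₁), (1/R₁ + 1, 0, t/R₁, 0), (0, t/R₂, 0, t/R₂ − 1), (−t/R₂, 0, 1 − t/R₂, 0). (That is, the linearization matrix A²_{p₋,₋} of System 2 at the fixed point p₋,₋ has the same characteristic polynomial P⁰₋,₊ as the linearization A⁰_{p₋,₊} of the classical coupled angular momenta at p₋,₊; hence p₋,₋ is non-degenerate of elliptic-elliptic type for all t.) -/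
open Matrix Polynomial

lemma charpoly_conj_self {n : ℕ} (D M : Matrix (Fin n) (Fin n) ℝ) (hD : D * D = 1) :
    (D * M * D).charpoly = M.charpoly := by
  have hD' : D.map C * D.map C = 1 := by
    rw [← Matrix.map_mul, hD, Matrix.map_one _ C_0 C_1]
  have h1 : (D * M * D).charmatrix = D.map C * M.charmatrix * D.map C := by
    simp only [charmatrix, RingHom.mapMatrix_apply, Matrix.map_mul]
    rw [Matrix.mul_sub, Matrix.sub_mul]
    congr 1
    have hc : scalar (Fin n) X * D.map C = D.map C * scalar (Fin n) X :=
      scalar_commute X (fun r => Commute.all _ _) (D.map C)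
    rw [← hc, Matrix.mul_assoc, hD', Matrix.mul_one]
  rw [Matrix.charpoly, Matrix.charpoly, h1, Matrix.det_mul, Matrix.det_mul]
  have : (D.map C).det * (D.map C).det = 1 := by
    rw [← Matrix.det_mul, hD', Matrix.det_one]
  calc (D.map C).det * M.charmatrix.det * (D.map C).det
      = (D.map C).det * (D.map C).det * M.charmatrix.det := by ring
    _ = M.charmatrix.det := by rw [this, one_mul]

/-- The linearization `A²_{p₋,₋}` of System 2 of the b-coupled angular momenta
at `p₋,₋` has the same characteristic polynomial as the linearization
`A⁰_{p₋,₊}` of the classical coupled angular momenta at `p₋,₊`; hence `p₋,₋`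
is non-degenerate of elliptic-elliptic type for all `t`. -/
theorem bCAM_system2_p_minus_minus_charpoly (R₁ R₂ t : ℝ)
    (hR₁ : 0 < R₁) (hR₂ : 0 < R₂) :
    (!![0, -1 / R₁ - 1, 0, t / R₁;
        1 / R₁ + 1, 0, -t / R₁, 0;
        0, -t / R₂, 0, t / R₂ - 1;
        t / R₂, 0, 1 - t / R₂, 0] : Matrix (Fin 4) (Fin 4) ℝ).charpoly =
    (!![0, -1 / R₁ - 1, 0, -t / R₁;
        1 / R₁ + 1, 0, t / R₁, 0;
        0, t / R₂, 0, t / R₂ - 1;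
        -t / R₂, 0, 1 - t / R₂, 0] : Matrix (Fin 4) (Fin 4) ℝ).charpoly := by
  have hD : (!![(1:ℝ),0,0,0;0,1,0,0;0,0,-1,0;0,0,0,-1] : Matrix (Fin 4) (Fin 4) ℝ) *
      !![1,0,0,0;0,1,0,0;0,0,-1,0;0,0,0,-1] = 1 := by
    ext i j
    fin_cases i <;> fin_cases j <;>
      simp [Matrix.mul_apply, Fin.sum_univ_four, Matrix.one_apply, Matrix.vecHead, Matrix.vecTail]
  have key : (!![(1:ℝ),0,0,0;0,1,0,0;0,0,-1,0;0,0,0,-1] : Matrix (Fin 4) (Fin 4) ℝ) *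
      !![0, -1 / R₁ - 1, 0, -t / R₁;
        1 / R₁ + 1, 0, t / R₁, 0;
        0, t / R₂, 0, t / R₂ - 1;
        -t / R₂, 0, 1 - t / R₂, 0] *
      !![1,0,0,0;0,1,0,0;0,0,-1,0;0,0,0,-1] =
      !![0, -1 / R₁ - 1, 0, t / R₁;
        1 / R₁ + 1, 0, -t / R₁, 0;
        0, -t / R₂, 0, t / R₂ - 1;
        t / R₂, 0, 1 - t / R₂, 0] := by
    ext i j
    fin_cases i <;> fin_cases j <;>
      simp [Matrix.mul_apply, Fin.sum_univ_four, Matrix.vecHead, Matrix.vecTail] <;> ring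
  rw [← key, charpoly_conj_self _ _ hD]
end

section
/- Let R₁, R₂ > 0 and t ∈ ℝ. The 4×4 real matrix with rows (0, (2t−1)/R₁ − 1, 0, −t/R₁), (1 − (2t−1)/R₁, 0, t/R₁, 0), (0, t/R₂, 0, −t/R₂ − 1), (−t/R₂, 0, t/R₂ + 1, 0) has the same characteristic polynomial as the 4×4 real matrix with rows (0, (2t−1)/R₁ − 1, 0, t/R₁), (1 − (2t−1)/R₁, 0, −t/R₁, 0), (0, −t/R₂, 0, −t/R₂ − 1), (t/R₂, 0, t/R₂ + 1, 0). (That is, the linearization matrix A³_{p₋,₋} of System 3 at the fixed point p₋,₋ has the same characteristic polynomial P⁰₊,₋ as the linearization A⁰_{p₊,₋} of the classical coupled angular momenta at p₊,₋; hence in System 3 the point p₋,₋ is elliptic-elliptic for t < t⁻ or t > t⁺, focus-focus for t⁻ < t < t⁺, and degenerate for t ∈ {t⁻, t⁺}.) -/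
open Matrix Polynomial

lemma charpoly_conj_inv {n : ℕ} (A D : Matrix (Fin n) (Fin n) ℝ)
    (hD : D * D = 1) : (D * A * D).charpoly = A.charpoly := by
  have hc : charmatrix (D * A * D) =
      D.map C * charmatrix A * D.map C := by
    simp only [charmatrix, Matrix.mul_sub, Matrix.sub_mul]
    congr 1
    · have : (D.map C) * (D.map C) = 1 := by
        rw [← Matrix.map_mul, hD, Matrix.map_one _ (map_zero C) (map_one C)]
      calc (scalar (Fin n)) X = (D.map C) * (D.map C) * (scalar (Fin n)) X := by
            rw [this, Matrix.one_mul]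
        _ = (D.map C) * ((scalar (Fin n)) X) * (D.map C) := by
            rw [Matrix.mul_assoc, Matrix.mul_assoc, scalar_commute X (fun r => Commute.all _ _) _]
    · simp [Matrix.map_mul]
  have hdet : (D.map C).det * (D.map C).det = 1 := by
    rw [← Matrix.det_mul, ← Matrix.map_mul, hD, Matrix.map_one _ (map_zero C) (map_one C),
      Matrix.det_one]
  unfold Matrix.charpoly
  rw [hc, Matrix.det_mul, Matrix.det_mul, mul_comm, ← mul_assoc, hdet, one_mul]

/-- The linearization `A³_{p₋,₋}` of System 3 of the b-coupled angular momenta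
at `p₋,₋` has the same characteristic polynomial as the linearization
`A⁰_{p₊,₋}` of the classical coupled angular momenta at `p₊,₋`; hence in
System 3 the point `p₋,₋` is elliptic-elliptic for `t < t⁻` or `t > t⁺`,
focus-focus for `t⁻ < t < t⁺`, and degenerate for `t ∈ {t⁻, t⁺}`. -/
theorem bCAM_system3_p_minus_minus_charpoly (R₁ R₂ t : ℝ)
    (hR₁ : 0 < R₁) (hR₂ : 0 < R₂) :
    (!![0, (2 * t - 1) / R₁ - 1, 0, -t / R₁;
        1 - (2 * t - 1) / R₁, 0, t / R₁, 0;
        0, t / R₂, 0, -t / R₂ - 1;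
        -t / R₂, 0, t / R₂ + 1, 0] : Matrix (Fin 4) (Fin 4) ℝ).charpoly =
    (!![0, (2 * t - 1) / R₁ - 1, 0, t / R₁;
        1 - (2 * t - 1) / R₁, 0, -t / R₁, 0;
        0, -t / R₂, 0, -t / R₂ - 1;
        t / R₂, 0, t / R₂ + 1, 0] : Matrix (Fin 4) (Fin 4) ℝ).charpoly := by
  set D : Matrix (Fin 4) (Fin 4) ℝ :=
    !![1, 0, 0, 0; 0, 1, 0, 0; 0, 0, -1, 0; 0, 0, 0, -1] with hDdef
  have hD : D * D = 1 := by
    ext i j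
    fin_cases i <;> fin_cases j <;>
      simp [hDdef, Matrix.mul_apply, Fin.sum_univ_succ, Matrix.one_apply]
  have key : (!![0, (2 * t - 1) / R₁ - 1, 0, -t / R₁;
        1 - (2 * t - 1) / R₁, 0, t / R₁, 0;
        0, t / R₂, 0, -t / R₂ - 1;
        -t / R₂, 0, t / R₂ + 1, 0] : Matrix (Fin 4) (Fin 4) ℝ) =
      D * (!![0, (2 * t - 1) / R₁ - 1, 0, t / R₁;
        1 - (2 * t - 1) / R₁, 0, -t / R₁, 0;
        0, -t / R₂, 0, -t / R₂ - 1;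
        t / R₂, 0, t / R₂ + 1, 0] : Matrix (Fin 4) (Fin 4) ℝ) * D := by
    ext i j
    fin_cases i <;> fin_cases j <;>
      simp [hDdef, Matrix.mul_apply, Fin.sum_univ_succ] <;> ring
  rw [key, charpoly_conj_inv _ _ hD]
end

section
/- Let R₁, R₂ > 0 and t ∈ ℝ. The characteristic polynomial of the 4×4 real matrix with rows (0, (2t−1)/R₁ − 1, 0, t/R₁), (1 − (2t−1)/R₁, 0, −t/R₁, 0), (0, −t/R₂, 0, −t/R₂ − 1), (t/R₂, 0, t/R₂ + 1, 0) equals λ⁴ + ((1−2t)²/R₁² + 2(R₂ − t² − 2tR₂)/(R₁R₂) + t(t + 2R₂)/R₂² + 2)·λ² + (−t² + tR₁ − 2tR₂ + t + R₁R₂ + R₂)²/(R₁²R₂²). -/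
open Matrix Polynomial

theorem charpoly_coupled_rotations {R : Type*} [CommRing R] (p q b c : R) :
    (!![0, -p, 0, b;
        p, 0, -b, 0;
        0, -c, 0, -q;
        c, 0, q, 0] : Matrix (Fin 4) (Fin 4) R).charpoly =
      X ^ 4 + C (p ^ 2 + q ^ 2 - 2 * b * c) * X ^ 2 + C ((p * q + b * c) ^ 2) := by
  rw [Matrix.charpoly, Matrix.det_succ_row_zero]
  simp [Fin.sum_univ_succ, det_fin_three, charmatrix_apply, Fin.succAbove, map_ofNat]
  ring

/-- The characteristic polynomial `P⁰₊,₋(λ)` of the linearization of the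
classical coupled angular momenta at the fixed point `p₊,₋`. -/
theorem CAM_charpoly_p_plus_minus (R₁ R₂ t : ℝ) (hR₁ : 0 < R₁) (hR₂ : 0 < R₂) :
    (!![0, (2 * t - 1) / R₁ - 1, 0, t / R₁;
        1 - (2 * t - 1) / R₁, 0, -t / R₁, 0;
        0, -t / R₂, 0, -t / R₂ - 1;
        t / R₂, 0, t / R₂ + 1, 0] : Matrix (Fin 4) (Fin 4) ℝ).charpoly =
      X ^ 4 +
        C ((1 - 2 * t) ^ 2 / R₁ ^ 2 + 2 * (R₂ - t ^ 2 - 2 * t * R₂) / (R₁ * R₂) +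
            t * (t + 2 * R₂) / R₂ ^ 2 + 2) * X ^ 2 +
        C ((-t ^ 2 + t * R₁ - 2 * t * R₂ + t + R₁ * R₂ + R₂) ^ 2 / (R₁ ^ 2 * R₂ ^ 2)) := by
  have hgeneral := charpoly_coupled_rotations (1 - (2 * t - 1) / R₁) (t / R₂ + 1) (t / R₁) (t / R₂)
  simp only [neg_sub, ← neg_div, neg_add'] at hgeneral
  rw [hgeneral]
  congrm X ^ 4 + C ?_ * X ^ 2 + C ?_ <;> field_simp <;> ring
end

section
/- Let R₁, R₂ > 0 and t ∈ ℝ. The characteristic polynomial of the 4×4 real matrix with rows (0, −1/R₁ − 1, 0, t/R₁), (1/R₁ + 1, 0, −t/R₁, 0), (0, t/R₂, 0, −t/R₂ − 1), (−t/R₂, 0, t/R₂ + 1, 0) equals λ⁴ + (1/R₁² + 2(t² + R₂)/(R₁R₂) + t(t + 2R₂)/R₂² + 2)·λ² + (−t² + tR₁ + t + R₁R₂ + R₂)²/(R₁²R₂²). -/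
/-!
The matrix is `N ⊗ J` with `N = !![a, -b; -c, d]`, `a = 1/R₁ + 1`, `b = t/R₁`, `c = t/R₂`,
`d = t/R₂ + 1`, and `J` the rotation by a right angle. Its eigenvalues are `±i μ` for the
eigenvalues `μ` of `N`, so its characteristic polynomial is `λ⁴ + tr(N²) λ² + (det N)²`;
clearing the denominators `R₁, R₂ ≠ 0` turns these coefficients into the stated ones.
-/

open Matrix Polynomial

theorem charpoly_kron_rotation {R : Type*} [CommRing R] (a b c d : R) :
    (!![0, -a, 0, b;
        a, 0, -b, 0;
        0, c, 0, -d;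
        -c, 0, d, 0] : Matrix (Fin 4) (Fin 4) R).charpoly =
      X ^ 4 + C (a ^ 2 + d ^ 2 + 2 * b * c) * X ^ 2 + C ((a * d - b * c) ^ 2) := by
  simp [Matrix.charpoly, det_succ_row_zero, Fin.sum_univ_succ, charmatrix_apply, Fin.succAbove,
    map_ofNat]
  ring

/-- The characteristic polynomial `P⁰₊,₊(λ)` of the linearization of the
classical coupled angular momenta at the fixed point `p₊,₊`. -/
theorem CAM_charpoly_p_plus_plus (R₁ R₂ t : ℝ) (hR₁ : 0 < R₁) (hR₂ : 0 < R₂) :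
    (!![0, -1 / R₁ - 1, 0, t / R₁;
        1 / R₁ + 1, 0, -t / R₁, 0;
        0, t / R₂, 0, -t / R₂ - 1;
        -t / R₂, 0, t / R₂ + 1, 0] : Matrix (Fin 4) (Fin 4) ℝ).charpoly =
      X ^ 4 +
        C (1 / R₁ ^ 2 + 2 * (t ^ 2 + R₂) / (R₁ * R₂) + t * (t + 2 * R₂) / R₂ ^ 2 + 2) * X ^ 2 +
        C ((-t ^ 2 + t * R₁ + t + R₁ * R₂ + R₂) ^ 2 / (R₁ ^ 2 * R₂ ^ 2)) := by
  have hcharpoly := charpoly_kron_rotation (1 / R₁ + 1) (t / R₁) (t / R₂) (t / R₂ + 1)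
  simp only [neg_add', ← neg_div] at hcharpoly
  rw [hcharpoly]
  have h₁ := hR₁.ne'
  have h₂ := hR₂.ne'
  congr 4 <;> field_simp <;> ring
end
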